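/- arXiv:1812.00284 — 2 statements merged into one kernel-verified Lean document; each statement's English description precedes it below -/
import Mathlib

section
/- Let γ ≥ 0 be an integer and let S be a γ-hyperelliptic numerical semigroup. Then every even integer m with m ≥ 4γ belongs to S. -/
/-- A numerical semigroup: a subset of ℕ containing 0, closed under addition,
with finite complement. -/
def IsNumericalSemigroup (S : Set ℕ) : Prop :=
  0 ∈ S ∧ (∀ a ∈ S, ∀ b ∈ S, a + b ∈ S) ∧ Sᶜ.Finite

/-- The genus of `S`: the number of gaps (elements of ℕ not in `S`). -/
noncomputable def genus (S : Set ℕ) : ℕ := Sᶜ.ncard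

/-- `gap S i` is the `(i+1)`-st smallest gap of `S`, i.e. `ℓ_{i+1}` (0-indexed). -/
noncomputable def gap (S : Set ℕ) (i : ℕ) : ℕ := Nat.nth (fun n => n ∉ S) i

/-- The K-weight of `S`: `W_K = Σ_{i=1}^{g-1} (ℓ_i - i) + g - 1`. -/
noncomputable def Kweight (S : Set ℕ) : ℕ :=
  (∑ i ∈ Finset.range (genus S - 1), (gap S i - (i + 1))) + genus S - 1

/-- The S-weight of `S`: `W_S = Σ_{i=1}^{g} (ℓ_i - i)`. -/
noncomputable def Sweight (S : Set ℕ) : ℕ :=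
  ∑ i ∈ Finset.range (genus S), (gap S i - (i + 1))

/-- `S` is γ-hyperelliptic: it has exactly γ even elements in `[2, 4γ]`, and the
`(γ+1)`-st smallest positive element of `S` is `4γ+2`. -/
def GammaHyperelliptic (γ : ℕ) (S : Set ℕ) : Prop :=
  {n | n ∈ Set.Icc 2 (4 * γ) ∧ Even n ∧ n ∈ S}.ncard = γ ∧
  Nat.nth (fun n => n ∈ S ∧ n ≠ 0) γ = 4 * γ + 2


/-!
Halve the even elements: `T = {j | 2 * j ∈ S}` is again closed under addition, has exactly `γ`
elements in `[1, 2γ]`, and contains `2γ + 1`. If `n ∉ T` then `T ∩ (0, n)` and its reflection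
`n - (T ∩ (0, n))` are disjoint, so `T` has at most `(n - 1) / 2` elements in `(0, n)`. For the
least `n ≥ 2γ` outside `T` this forces `n = 2γ + 1`, which lies in `T`.
-/

open Finset

section AddClosed

variable {T : Set ℕ} [DecidablePred (· ∈ T)]

theorem two_mul_card_filter_mem_Ioo_le (hT : ∀ a ∈ T, ∀ b ∈ T, a + b ∈ T) {n : ℕ} (hn : n ∉ T) :
    2 * #{j ∈ Ioo 0 n | j ∈ T} ≤ n - 1 := by
  set A := {j ∈ Ioo 0 n | j ∈ T}
  have hA : ∀ j ∈ A, 0 < j ∧ j < n ∧ j ∈ T := fun j hj => by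
    simp only [A, mem_filter, mem_Ioo] at hj
    exact ⟨hj.1.1, hj.1.2, hj.2⟩
  have hreflect : #(A.image (n - ·)) = #A :=
    card_image_of_injOn fun a ha b hb hab => by
      have := hA a ha; have := hA b hb; omega
  have hdisj : Disjoint A (A.image (n - ·)) := by
    refine disjoint_left.mpr fun a ha ha' => hn ?_
    obtain ⟨b, hb, rfl⟩ := mem_image.mp ha'
    obtain ⟨-, hbn, hbT⟩ := hA b hb
    obtain ⟨-, -, haT⟩ := hA _ ha
    simpa [Nat.sub_add_cancel hbn.le] using hT _ haT b hbT
  have hsub : A ∪ A.image (n - ·) ⊆ Ioo 0 n := by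
    refine union_subset (filter_subset _ _) fun a ha => ?_
    obtain ⟨b, hb, rfl⟩ := mem_image.mp ha
    have := hA b hb
    exact mem_Ioo.mpr ⟨by omega, by omega⟩
  calc 2 * #A = #(A ∪ A.image (n - ·)) := by rw [card_union_of_disjoint hdisj, hreflect]; ring
    _ ≤ #(Ioo 0 n) := card_le_card hsub
    _ = n - 1 := by simp

theorem mem_of_two_mul_le (hT : ∀ a ∈ T, ∀ b ∈ T, a + b ∈ T) (h0 : 0 ∈ T) {k : ℕ}
    (hcard : k ≤ #{j ∈ Icc 1 (2 * k) | j ∈ T}) (hodd : 2 * k + 1 ∈ T) {n : ℕ} (hn : 2 * k ≤ n) :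
    n ∈ T := by
  induction n using Nat.strong_induction_on with
  | _ n ih =>
  by_contra hnT
  have hsub : {j ∈ Icc 1 (2 * k) | j ∈ T} ∪ Ioo (2 * k) n ⊆ {j ∈ Ioo 0 n | j ∈ T} := by
    intro j hj
    simp only [mem_union, mem_filter, mem_Icc, mem_Ioo] at hj ⊢
    rcases hj with ⟨⟨hj1, hjk⟩, hjT⟩ | ⟨hkj, hjn⟩
    · exact ⟨⟨hj1, lt_of_le_of_ne (hjk.trans hn) (by rintro rfl; exact hnT hjT)⟩, hjT⟩
    · exact ⟨⟨by omega, hjn⟩, ih j hjn hkj.le⟩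
  have hdisj : Disjoint {j ∈ Icc 1 (2 * k) | j ∈ T} (Ioo (2 * k) n) :=
    disjoint_left.mpr fun j hj hj' => by
      simp only [mem_filter, mem_Icc, mem_Ioo] at hj hj'
      omega
  have hlower := card_le_card hsub
  rw [card_union_of_disjoint hdisj, Nat.card_Ioo] at hlower
  have hupper := two_mul_card_filter_mem_Ioo_le hT hnT
  have hn0 : n ≠ 0 := by rintro rfl; exact hnT h0
  have hnodd : n ≠ 2 * k + 1 := by rintro rfl; exact hnT hodd
  omega

end AddClosed

namespace GammaHyperelliptic

variable {γ : ℕ} {S : Set ℕ}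

theorem four_mul_add_two_mem (h : GammaHyperelliptic γ S) : 4 * γ + 2 ∈ S := by
  have hmem := Nat.nth_mem_of_ne_zero (p := fun n => n ∈ S ∧ n ≠ 0) (n := γ) (by rw [h.2]; omega)
  rw [h.2] at hmem
  exact hmem.1

theorem card_filter_two_mul_mem [DecidablePred (· ∈ S)] (h : GammaHyperelliptic γ S) :
    #{j ∈ Icc 1 (2 * γ) | 2 * j ∈ S} = γ := by
  have hset : {n | n ∈ Set.Icc 2 (4 * γ) ∧ Even n ∧ n ∈ S} =
      ↑({j ∈ Icc 1 (2 * γ) | 2 * j ∈ S}.map ⟨(2 * ·), mul_right_injective₀ two_ne_zero⟩) := by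
    ext n
    simp only [Set.mem_ofPred_eq, Set.mem_Icc, coe_map, Function.Embedding.coeFn_mk, coe_filter,
      mem_Icc, Set.mem_image]
    constructor
    · rintro ⟨hn, ⟨j, rfl⟩, hS⟩
      exact ⟨j, ⟨by omega, by rwa [two_mul]⟩, two_mul j⟩
    · rintro ⟨j, ⟨hj, hS⟩, rfl⟩
      exact ⟨by omega, even_two_mul j, hS⟩
  simpa only [hset, Set.ncard_coe_finset, card_map] using h.1

end GammaHyperelliptic

theorem even_ge_mem (γ : ℕ) (S : Set ℕ) (hS : IsNumericalSemigroup S)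
    (hγ : GammaHyperelliptic γ S) (m : ℕ) (hm : Even m) (hge : 4 * γ ≤ m) :
    m ∈ S := by
  classical
  obtain ⟨hS0, hSadd, -⟩ := hS
  obtain ⟨k, rfl⟩ := hm
  have hhalf : 2 * k ∈ S := by
    refine mem_of_two_mul_le (T := {j | 2 * j ∈ S}) (k := γ) (fun a ha b hb => ?_) (by simpa)
      hγ.card_filter_two_mul_mem.ge ?_ (by omega)
    · simpa [mul_add] using hSadd _ ha _ hb
    · simpa [mul_add, ← mul_assoc] using hγ.four_mul_add_two_mem
  rwa [two_mul] at hhalf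
end

section
/- Let γ ≥ 1 be an integer and let S be a γ-hyperelliptic numerical semigroup of genus g ≥ 3γ whose multiplicity (smallest nonzero element) is 4 and whose K-weight is not maximal among such semigroups (i.e., W_K(S) < C(g-2γ, 2) + 2γ²). Then C(g-2γ, 2) + γ² + γ ≤ W_K(S) ≤ C(g-2γ, 2) + 2(γ² - γ) + 2. -/
/-!
As `4 ∈ S` and the first `γ` positive elements of `S` lie below `4γ + 2`, they are
`4, 8, …, 4γ`. Hence the least elements of `S` in the residue classes `2, 1, 3` mod `4` are
`4γ + 2`, `4α + 1`, `4β + 3` with `γ < α`, and the gaps are the numbers below these in their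
classes. Summing the gaps gives `W_K = C(g - 2γ, 2) + γ² + γ + 2·C(t, 2)`, where `t = β - α` if
`α ≤ β` and `t = α - β - 1` otherwise. Non-maximality forces `t < γ`, and both bounds follow.
-/

open Finset

section Gaps

variable {S : Set ℕ} {G : Finset ℕ}

lemma genus_eq_card (hG : Sᶜ = G) : genus S = #G := by
  rw [genus, hG, Set.ncard_coe_finset]

lemma finite_setOf_notMem_of_compl_eq (hG : Sᶜ = G) :
    (Set.ofPred fun n => n ∉ S).Finite := by
  change Sᶜ.Finite
  exact hG ▸ G.finite_toSet

lemma toFinset_setOf_notMem_eq (hG : Sᶜ = G) :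
    (finite_setOf_notMem_of_compl_eq hG).toFinset = G := by
  ext n
  simp [← Finset.mem_coe (s := G), ← hG]

lemma sum_range_card_gap (hG : Sᶜ = G) : ∑ i ∈ range #G, gap S i = ∑ n ∈ G, n := by
  have hf := finite_setOf_notMem_of_compl_eq hG
  have hG' := toFinset_setOf_notMem_eq hG
  have himage : (range #G).image (gap S) = G := by
    rw [← Finset.coe_inj, Finset.coe_image, Finset.coe_range, ← hG', Set.Finite.coe_toFinset]
    exact Nat.image_nth_Iio_card hf
  conv_rhs => rw [← himage]
  refine (Finset.sum_image (f := id) fun i hi j hj h => ?_).symm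
  rw [Finset.mem_coe, Finset.mem_range, ← hG'] at hi hj
  exact Nat.nth_injOn hf hi hj h

lemma succ_le_gap (h0 : 0 ∈ S) (hG : Sᶜ = G) {i : ℕ} (hi : i < #G) : i + 1 ≤ gap S i := by
  have hf := finite_setOf_notMem_of_compl_eq hG
  rw [← toFinset_setOf_notMem_eq hG] at hi
  induction i with
  | zero =>
    exact Nat.pos_of_ne_zero fun h => Nat.nth_mem_of_lt_card hf hi (by rw [← gap, h]; exact h0)
  | succ i ih =>
    exact (ih (by omega)).trans_lt (Nat.nth_lt_nth_of_lt_card hf (Nat.lt_succ_self i) hi)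

lemma gap_card_sub_one (hG : Sᶜ = G) (hne : G.Nonempty) : gap S (#G - 1) = G.max' hne := by
  have hf := finite_setOf_notMem_of_compl_eq hG
  have hG' := toFinset_setOf_notMem_eq hG
  have hlt : #G - 1 < #hf.toFinset := by rw [hG']; exact Nat.sub_lt hne.card_pos one_pos
  rw [gap, Nat.nth_eq_orderEmbOfFin hf hlt]
  simp only [hG']
  exact Finset.orderEmbOfFin_last rfl hne.card_pos

lemma sum_range_add_one_eq_choose_two (k : ℕ) : ∑ i ∈ range k, (i + 1) = (k + 1).choose 2 := by
  rw [Nat.choose_two_right, ← Finset.sum_range_id, Finset.sum_range_succ']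
  rfl

lemma Kweight_add_choose_two_add_max' (h0 : 0 ∈ S) (hG : Sᶜ = G) (hne : G.Nonempty) :
    Kweight S + (#G).choose 2 + G.max' hne + 1 = ∑ n ∈ G, n + #G := by
  obtain ⟨k, hk⟩ : ∃ k, #G = k + 1 := Nat.exists_eq_add_one.2 hne.card_pos
  have hsub : ∑ i ∈ range k, (gap S i - (i + 1)) + ∑ i ∈ range k, (i + 1) =
      ∑ i ∈ range k, gap S i := by
    rw [← Finset.sum_add_distrib]
    refine Finset.sum_congr rfl fun i hi => Nat.sub_add_cancel (succ_le_gap h0 hG ?_)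
    rw [Finset.mem_range] at hi
    omega
  have hlast := gap_card_sub_one hG hne
  have hsum := sum_range_card_gap hG
  rw [hk, Finset.sum_range_succ] at hsum
  rw [hk, Nat.add_sub_cancel] at hlast
  rw [Kweight, genus_eq_card hG, hk, Nat.add_sub_cancel, ← sum_range_add_one_eq_choose_two]
  omega

end Gaps

section ResidueClasses

variable {S : Set ℕ} {m : ℕ}

lemma add_mul_mem (hadd : ∀ a ∈ S, ∀ b ∈ S, a + b ∈ S) (hm : m ∈ S) {a : ℕ} (ha : a ∈ S)
    (k : ℕ) : a + m * k ∈ S := by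
  induction k with
  | zero => simpa
  | succ k ih => rw [Nat.mul_succ, ← add_assoc]; exact hadd _ ih _ hm

lemma mem_iff_le_of_isLeast (hadd : ∀ a ∈ S, ∀ b ∈ S, a + b ∈ S) (hm : m ∈ S) {r w n : ℕ}
    (hw : IsLeast {n | n ∈ S ∧ n % m = r} w) (hn : n % m = r) : n ∈ S ↔ w ≤ n := by
  refine ⟨fun h => hw.2 ⟨h, hn⟩, fun h => ?_⟩
  obtain ⟨k, hk⟩ := (Nat.modEq_iff_dvd' h).1 (hw.1.2.trans hn.symm)
  rw [← Nat.add_sub_cancel' h, hk]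
  exact add_mul_mem hadd hm hw.1.1 k

lemma exists_isLeast_mem_mod (hfin : Sᶜ.Finite) {r : ℕ} (hr : r < m) :
    ∃ w, IsLeast {n | n ∈ S ∧ n % m = r} w := by
  obtain ⟨N, hN⟩ := hfin.bddAbove
  refine ⟨_, isLeast_csInf ⟨m * (N + 1) + r, ?_, ?_⟩⟩
  · by_contra h
    have := hN h
    nlinarith
  · simp [Nat.mod_eq_of_lt hr]

lemma dvd_of_mem_of_lt_nth (hadd : ∀ a ∈ S, ∀ b ∈ S, a + b ∈ S) (hm : m ∈ S) (hm0 : 0 < m)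
    (hinf : (Set.ofPred fun n => n ∈ S ∧ n ≠ 0).Infinite) {γ r : ℕ} (hr : 0 < r)
    (hnth : Nat.nth (fun n => n ∈ S ∧ n ≠ 0) γ = m * γ + r) {n : ℕ} (hn : n ∈ S)
    (hlt : n < m * γ + r) : m ∣ n := by
  classical
  -- otherwise `n, m, 2m, …, γm` would be `γ + 1` positive elements of `S` below `mγ + r`
  by_contra hnd
  have hn0 : n ≠ 0 := by rintro rfl; exact hnd (dvd_zero m)
  have hcount := Nat.count_nth_of_infinite hinf γ
  rw [hnth, Nat.count_eq_card_filter_range] at hcount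
  have hmul_lt : ∀ k < γ, m * (k + 1) < m * γ + r := fun k hk =>
    (Nat.mul_le_mul_left m hk).trans_lt (Nat.lt_add_of_pos_right hr)
  have hsub : insert n ((range γ).image fun k => m * (k + 1)) ⊆
      (range (m * γ + r)).filter fun n => n ∈ S ∧ n ≠ 0 := by
    intro x hx
    simp only [Finset.mem_insert, Finset.mem_image, Finset.mem_range] at hx
    rcases hx with rfl | ⟨k, hk, rfl⟩
    · exact Finset.mem_filter.2 ⟨Finset.mem_range.2 hlt, hn, hn0⟩
    · refine Finset.mem_filter.2 ⟨Finset.mem_range.2 (hmul_lt k hk), ?_, by positivity⟩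
      simpa [mul_add, add_comm] using add_mul_mem hadd hm hm k
  have hnotin : n ∉ (range γ).image fun k => m * (k + 1) := by
    simp only [Finset.mem_image, not_exists, not_and]
    exact fun k _ hk => hnd ⟨k + 1, hk.symm⟩
  have hinj : Function.Injective fun k => m * (k + 1) := fun a b h =>
    Nat.succ_injective (Nat.eq_of_mul_eq_mul_left hm0 h)
  have := Finset.card_le_card hsub
  rw [Finset.card_insert_of_notMem hnotin, Finset.card_image_of_injective _ hinj,
    Finset.card_range] at this
  omega

end ResidueClasses

/-- The gap set of a semigroup containing `4` whose least elements in the residue classes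
`1, 2, 3` mod `4` are `4α + 1`, `4γ + 2`, `4β + 3`. -/
def fourGaps (γ α β : ℕ) : Finset ℕ :=
  (range γ).image (4 * · + 2) ∪ (range α).image (4 * · + 1) ∪ (range β).image (4 * · + 3)

section FourGaps

variable {γ α β n : ℕ}

lemma mem_fourGaps : n ∈ fourGaps γ α β ↔
    n % 4 = 2 ∧ n < 4 * γ + 2 ∨ n % 4 = 1 ∧ n < 4 * α + 1 ∨ n % 4 = 3 ∧ n < 4 * β + 3 := by
  simp only [fourGaps, Finset.mem_union, Finset.mem_image, Finset.mem_range]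
  constructor
  · rintro ((⟨k, hk, rfl⟩ | ⟨k, hk, rfl⟩) | ⟨k, hk, rfl⟩) <;> omega
  · rintro (h | h | h)
    · exact Or.inl (Or.inl ⟨n / 4, by omega, by omega⟩)
    · exact Or.inl (Or.inr ⟨n / 4, by omega, by omega⟩)
    · exact Or.inr ⟨n / 4, by omega, by omega⟩

lemma sum_range_four_mul_add (n c : ℕ) :
    ∑ k ∈ range n, (4 * k + c) + 2 * n = 2 * n ^ 2 + c * n := by
  induction n with
  | zero => simp
  | succ n ih => rw [Finset.sum_range_succ]; linarith

lemma disjoint_fourGaps_pieces :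
    Disjoint ((range γ).image (4 * · + 2)) ((range α).image (4 * · + 1)) ∧
      Disjoint ((range γ).image (4 * · + 2) ∪ (range α).image (4 * · + 1))
        ((range β).image (4 * · + 3)) := by
  simp only [Finset.disjoint_left, Finset.mem_union, Finset.mem_image, Finset.mem_range]
  constructor <;> rintro _ _ ⟨k, -, rfl⟩ <;> omega

lemma injOn_four_mul_add (c : ℕ) (s : Finset ℕ) : Set.InjOn (4 * · + c) s :=
  fun a _ b _ h => by simp only at h; omega

lemma card_fourGaps : #(fourGaps γ α β) = γ + α + β := by
  obtain ⟨h₁, h₂⟩ := disjoint_fourGaps_pieces (γ := γ) (α := α) (β := β)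
  rw [fourGaps, Finset.card_union_of_disjoint h₂, Finset.card_union_of_disjoint h₁]
  simp only [Finset.card_image_of_injOn (injOn_four_mul_add _ _), Finset.card_range]

lemma sum_fourGaps : ∑ n ∈ fourGaps γ α β, n + α = 2 * (γ ^ 2 + α ^ 2 + β ^ 2) + β := by
  obtain ⟨h₁, h₂⟩ := disjoint_fourGaps_pieces (γ := γ) (α := α) (β := β)
  rw [fourGaps, Finset.sum_union h₂, Finset.sum_union h₁]
  simp only [Finset.sum_image (injOn_four_mul_add _ _)]
  have := sum_range_four_mul_add γ 2
  have := sum_range_four_mul_add α 1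
  have := sum_range_four_mul_add β 3
  linarith

lemma isGreatest_fourGaps_of_le (hγα : γ < α) (hαβ : α ≤ β) :
    IsGreatest (fourGaps γ α β : Set ℕ) (4 * β - 1) := by
  refine ⟨mem_fourGaps.2 (by omega), fun n hn => ?_⟩
  rw [Finset.mem_coe, mem_fourGaps] at hn
  omega

lemma isGreatest_fourGaps_of_lt (hγα : γ < α) (hβα : β < α) :
    IsGreatest (fourGaps γ α β : Set ℕ) (4 * α - 3) := by
  refine ⟨mem_fourGaps.2 (by omega), fun n hn => ?_⟩
  rw [Finset.mem_coe, mem_fourGaps] at hn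
  omega

end FourGaps

section MultiplicityFour

variable {S : Set ℕ} {γ : ℕ}

lemma exists_compl_eq_fourGaps (hS : IsNumericalSemigroup S) (h4 : 4 ∈ S)
    (hnth : Nat.nth (fun n => n ∈ S ∧ n ≠ 0) γ = 4 * γ + 2) :
    ∃ α β, γ < α ∧ Sᶜ = fourGaps γ α β := by
  obtain ⟨h0, hadd, hfin⟩ := hS
  have hinf : (Set.ofPred fun n => n ∈ S ∧ n ≠ 0).Infinite :=
    (hfin.infinite_compl.sdiff (Set.finite_singleton 0)).mono fun n hn =>
      ⟨by simpa using hn.1, hn.2⟩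
  have hdvd : ∀ n ∈ S, n < 4 * γ + 2 → 4 ∣ n := fun n hn =>
    dvd_of_mem_of_lt_nth hadd h4 (by norm_num) hinf (by norm_num) hnth hn
  have hw0 : IsLeast {n | n ∈ S ∧ n % 4 = 0} 0 := ⟨⟨h0, rfl⟩, fun n _ => Nat.zero_le n⟩
  have hw2 : IsLeast {n | n ∈ S ∧ n % 4 = 2} (4 * γ + 2) := by
    refine ⟨⟨(hnth ▸ Nat.nth_mem_of_infinite hinf γ).1, by omega⟩, fun n ⟨hn, hmod⟩ => ?_⟩
    by_contra hlt
    have := hdvd n hn (by omega)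
    omega
  obtain ⟨w₁, hw₁⟩ := exists_isLeast_mem_mod hfin (show 1 < 4 by norm_num)
  obtain ⟨w₃, hw₃⟩ := exists_isLeast_mem_mod hfin (show 3 < 4 by norm_num)
  have hw₁mod := hw₁.1.2
  have hw₃mod := hw₃.1.2
  have hw₁gt : 4 * γ + 2 < w₁ := by
    by_contra hle
    have := hdvd w₁ hw₁.1.1 (by omega)
    omega
  refine ⟨w₁ / 4, w₃ / 4, by omega, Set.ext fun n => ?_⟩
  rw [Set.mem_compl_iff, Finset.mem_coe, mem_fourGaps]
  rcases (by omega : n % 4 = 0 ∨ n % 4 = 1 ∨ n % 4 = 2 ∨ n % 4 = 3) with h | h | h | h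
  · rw [mem_iff_le_of_isLeast hadd h4 hw0 h]; omega
  · rw [mem_iff_le_of_isLeast hadd h4 hw₁ h]; omega
  · rw [mem_iff_le_of_isLeast hadd h4 hw2 h]; omega
  · rw [mem_iff_le_of_isLeast hadd h4 hw₃ h]; omega

lemma exists_Kweight_eq {α β : ℕ} (h0 : 0 ∈ S) (hG : Sᶜ = fourGaps γ α β) (hγα : γ < α) :
    ∃ t : ℕ, Kweight S = (genus S - 2 * γ).choose 2 + γ ^ 2 + γ + 2 * t.choose 2 := by
  have hne : (fourGaps γ α β).Nonempty := ⟨1, mem_fourGaps.2 (by omega)⟩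
  have hK := Kweight_add_choose_two_add_max' h0 hG hne
  have hsum := sum_fourGaps (γ := γ) (α := α) (β := β)
  rw [card_fourGaps] at hK
  rw [genus_eq_card hG, card_fourGaps]
  rcases le_or_gt α β with hαβ | hβα
  · rw [← (isGreatest_fourGaps_of_le hγα hαβ).unique (Finset.isGreatest_max' _ hne)] at hK
    obtain ⟨t, rfl⟩ := Nat.exists_eq_add_of_le hαβ
    refine ⟨t, ?_⟩
    qify [show 1 ≤ 4 * (α + t) by omega] at hK hsum ⊢
    simp only [Nat.cast_choose_two] at hK ⊢
    rw [Nat.cast_sub (by omega)]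
    push_cast at hK hsum ⊢
    linear_combination hK + hsum
  · rw [← (isGreatest_fourGaps_of_lt hγα hβα).unique (Finset.isGreatest_max' _ hne)] at hK
    obtain ⟨t, rfl⟩ := Nat.exists_eq_add_of_lt hβα
    refine ⟨t, ?_⟩
    qify [show 3 ≤ 4 * (β + t + 1) by omega] at hK hsum ⊢
    simp only [Nat.cast_choose_two] at hK ⊢
    rw [Nat.cast_sub (by omega)]
    push_cast at hK hsum ⊢
    linear_combination hK + hsum

end MultiplicityFour

lemma two_mul_choose_two_add_self (n : ℕ) : 2 * n.choose 2 + n = n ^ 2 := by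
  induction n with
  | zero => rfl
  | succ n ih => rw [Nat.choose_succ_succ, Nat.choose_one_right]; linarith

lemma add_two_mul_choose_two_le_of_lt {γ t : ℕ} (h : γ ^ 2 + γ + 2 * t.choose 2 < 2 * γ ^ 2) :
    γ ^ 2 + γ + 2 * t.choose 2 ≤ 2 * (γ ^ 2 - γ) + 2 := by
  have hγ := two_mul_choose_two_add_self γ
  have htγ : t < γ := by
    by_contra! hγt
    have := Nat.choose_le_choose 2 hγt
    omega
  obtain ⟨d, rfl⟩ := Nat.exists_eq_add_of_lt htγ
  have hd := two_mul_choose_two_add_self (t + d)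
  have := Nat.choose_le_choose 2 (Nat.le_add_right t d)
  have hsq : (t + d + 1) ^ 2 = (t + d) ^ 2 + 2 * (t + d) + 1 := by ring
  omega

theorem Kweight_mult_four_nonmaximal_general (γ g : ℕ) (S : Set ℕ)
    (hS : IsNumericalSemigroup S) (hγS : GammaHyperelliptic γ S)
    (hg : genus S = g)
    (hmult : sInf {n | n ∈ S ∧ n ≠ 0} = 4)
    (hnonmax : Kweight S < Nat.choose (g - 2 * γ) 2 + 2 * γ ^ 2) :
    Nat.choose (g - 2 * γ) 2 + γ ^ 2 + γ ≤ Kweight S ∧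
      Kweight S ≤ Nat.choose (g - 2 * γ) 2 + 2 * (γ ^ 2 - γ) + 2 := by
  have h4 : 4 ∈ S := (hmult ▸ Nat.sInf_mem (Nat.nonempty_of_pos_sInf (by omega))).1
  obtain ⟨α, β, hγα, hG⟩ := exists_compl_eq_fourGaps hS h4 hγS.2
  obtain ⟨t, hK⟩ := exists_Kweight_eq hS.1 hG hγα
  rw [hg] at hK
  rw [hK] at hnonmax ⊢
  have := add_two_mul_choose_two_le_of_lt (γ := γ) (t := t) (by omega)
  omega

theorem Kweight_mult_four_nonmaximal (γ g : ℕ) (hγ : 1 ≤ γ) (S : Set ℕ)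
    (hS : IsNumericalSemigroup S) (hγS : GammaHyperelliptic γ S)
    (hg : genus S = g) (hgen : 3 * γ ≤ g)
    (hmult : sInf {n | n ∈ S ∧ n ≠ 0} = 4)
    (hnonmax : Kweight S < Nat.choose (g - 2 * γ) 2 + 2 * γ ^ 2) :
    Nat.choose (g - 2 * γ) 2 + γ ^ 2 + γ ≤ Kweight S ∧
      Kweight S ≤ Nat.choose (g - 2 * γ) 2 + 2 * (γ ^ 2 - γ) + 2 :=
  Kweight_mult_four_nonmaximal_general γ g S hS hγS hg hmult hnonmax
end
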